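/- Under the assumptions of the final-size relation, with f : ℝ⁵ → ℝ a linear functional and H'(t) = fᵀx(t), H(t) converges to H̄ = H(0) + f_H + R_H(S(0) - S̄), where f_H = -fᵀF⁻¹x(0) and R_H = -fᵀF⁻¹b. -/

import Mathlib

/-!
The source term enters the equations of `x` and `S` with opposite signs, so `x + S • b`
has derivative `F *ᵥ x`. Integrating over `[0, ∞)` gives
`F *ᵥ ∫ x = S̄ • b - x 0 - S 0 • b`, which determines `∫ x` because `F` is invertible;
and `H ∞ - H 0 = f ⬝ᵥ ∫ x`.
-/

open Matrix MeasureTheory Filter Set Topology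

theorem tendsto_add_integral_Ioi_of_hasDerivAt {E : Type*} [NormedAddCommGroup E]
    [NormedSpace ℝ E] [CompleteSpace E] {g g' : ℝ → E} {a : ℝ}
    (hderiv : ∀ t ∈ Ici a, HasDerivAt g (g' t) t) (hint : IntegrableOn g' (Ioi a)) :
    Tendsto g atTop (𝓝 (g a + ∫ t in Ioi a, g' t)) := by
  have hlim := tendsto_limUnder_of_hasDerivAt_of_integrableOn_Ioi
    (fun t ht => hderiv t (mem_Ici_of_Ioi ht)) hint
  rwa [integral_Ioi_of_hasDerivAt_of_tendsto' hderiv hint hlim, add_sub_cancel]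

section

variable {X : Type*} [MeasurableSpace X] {μ : Measure X} {m n : Type*} [Fintype m] [Fintype n]

theorem MeasureTheory.Integrable.const_mulVec (M : Matrix m n ℝ) {φ : X → n → ℝ}
    (hφ : Integrable φ μ) : Integrable (fun x => M *ᵥ φ x) μ :=
  (LinearMap.toContinuousLinearMap M.mulVecLin).integrable_comp hφ

theorem MeasureTheory.Integrable.const_dotProduct (v : n → ℝ) {φ : X → n → ℝ}
    (hφ : Integrable φ μ) : Integrable (fun x => v ⬝ᵥ φ x) μ :=
  (LinearMap.toContinuousLinearMap (dotProductBilin ℝ ℝ v)).integrable_comp hφ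

theorem Matrix.integral_mulVec (M : Matrix m n ℝ) {φ : X → n → ℝ}
    (hφ : Integrable φ μ) :
    ∫ x, M *ᵥ φ x ∂μ = M *ᵥ ∫ x, φ x ∂μ :=
  (LinearMap.toContinuousLinearMap M.mulVecLin).integral_comp_comm hφ

theorem Matrix.integral_dotProduct (v : n → ℝ) {φ : X → n → ℝ} (hφ : Integrable φ μ) :
    ∫ x, v ⬝ᵥ φ x ∂μ = v ⬝ᵥ ∫ x, φ x ∂μ :=
  (LinearMap.toContinuousLinearMap (dotProductBilin ℝ ℝ v)).integral_comp_comm hφ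

end

section

variable {n : Type*} [Fintype n] [DecidableEq n]

theorem integral_Ioi_eq_of_finalSize {F : Matrix n n ℝ} (hF : IsUnit F.det) {b : n → ℝ}
    {x : ℝ → n → ℝ} {S ρ : ℝ → ℝ} {Sbar : ℝ}
    (hx : ∀ t, HasDerivAt x (F *ᵥ x t + (S t * ρ t) • b) t)
    (hS : ∀ t, HasDerivAt S (-(S t) * ρ t) t)
    (hSlim : Tendsto S atTop (𝓝 Sbar)) (hxlim : Tendsto x atTop (𝓝 0))
    (hxint : IntegrableOn x (Ioi 0)) :
    ∫ t in Ioi 0, x t = F⁻¹ *ᵥ (-x 0 - (S 0 - Sbar) • b) := by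
  have hy : ∀ t ∈ Ici (0 : ℝ), HasDerivAt (fun t => x t + S t • b) (F *ᵥ x t) t :=
    fun t _ => ((hx t).add ((hS t).smul_const b)).congr_deriv (by module)
  have hylim : Tendsto (fun t => x t + S t • b) atTop (𝓝 (Sbar • b)) := by
    simpa using hxlim.add (hSlim.smul_const b)
  have hFI : F *ᵥ ∫ t in Ioi 0, x t = -x 0 - (S 0 - Sbar) • b := by
    rw [← integral_mulVec F hxint,
      integral_Ioi_of_hasDerivAt_of_tendsto' hy (hxint.const_mulVec F) hylim]
    module
  rw [← hFI, mulVec_mulVec, nonsing_inv_mul F hF, one_mulVec]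

end

open Matrix MeasureTheory Filter in
theorem idart_final_size_H_general
    (F : Matrix (Fin 5) (Fin 5) ℝ) (hFinv : IsUnit F.det)
    (b c f : Fin 5 → ℝ)
    (x : ℝ → Fin 5 → ℝ) (S H : ℝ → ℝ)
    (hx : ∀ t i, HasDerivAt (fun t => x t i)
      ((F *ᵥ x t) i + b i * (S t * (c ⬝ᵥ x t))) t)
    (hS : ∀ t, HasDerivAt S (-(S t) * (c ⬝ᵥ x t)) t)
    (hH : ∀ t, HasDerivAt H (f ⬝ᵥ x t) t)
    (Sbar : ℝ)
    (hSlim : Tendsto S atTop (nhds Sbar))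
    (hxlim : Tendsto x atTop (nhds 0))
    (hxint : ∀ i, IntegrableOn (fun t => x t i) (Set.Ioi (0:ℝ))) :
    Tendsto H atTop (nhds
      (H 0 + (-(f ⬝ᵥ (F⁻¹ *ᵥ x 0))) + (-(f ⬝ᵥ (F⁻¹ *ᵥ b))) * (S 0 - Sbar))) := by
  have hxint' : IntegrableOn x (Set.Ioi 0) := Integrable.of_eval hxint
  have hI := integral_Ioi_eq_of_finalSize hFinv
    (fun t => hasDerivAt_pi.2 fun i => by simpa [mul_comm] using hx t i) hS hSlim hxlim hxint'
  have hHlim := tendsto_add_integral_Ioi_of_hasDerivAt (fun t _ => hH t)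
    (hxint'.const_dotProduct f)
  rw [integral_dotProduct f hxint', hI] at hHlim
  convert hHlim using 2
  simp only [mulVec_sub, mulVec_neg, mulVec_smul, dotProduct_sub, dotProduct_neg,
    dotProduct_smul, smul_eq_mul]
  ring

open Matrix MeasureTheory Filter in
/-- Final-size relation for the healed: H(t) → H(0) + f_H + R_H(S(0) - S̄),
where f_H = -fᵀF⁻¹x(0) and R_H = -fᵀF⁻¹b. -/
theorem idart_final_size_H
    (F : Matrix (Fin 5) (Fin 5) ℝ) (hFinv : IsUnit F.det)
    (b c f : Fin 5 → ℝ)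
    (hb : b = ![1, 0, 0, 0, 0])
    (α β γ δ : ℝ) (hc : c = ![α, β, γ, δ, 0])
    (x : ℝ → Fin 5 → ℝ) (S H : ℝ → ℝ)
    (hx : ∀ t i, HasDerivAt (fun t => x t i)
      ((F *ᵥ x t) i + b i * (S t * (c ⬝ᵥ x t))) t)
    (hS : ∀ t, HasDerivAt S (-(S t) * (c ⬝ᵥ x t)) t)
    (hH : ∀ t, HasDerivAt H (f ⬝ᵥ x t) t)
    (hS0 : 0 < S 0)
    (Sbar : ℝ) (hSbar : 0 < Sbar)
    (hSlim : Tendsto S atTop (nhds Sbar))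
    (hxlim : Tendsto x atTop (nhds 0))
    (hxint : ∀ i, IntegrableOn (fun t => x t i) (Set.Ioi (0:ℝ))) :
    Tendsto H atTop (nhds
      (H 0 + (-(f ⬝ᵥ (F⁻¹ *ᵥ x 0))) + (-(f ⬝ᵥ (F⁻¹ *ᵥ b))) * (S 0 - Sbar))) :=
  idart_final_size_H_general F hFinv b c f x S H hx hS hH Sbar hSlim hxlim hxint
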